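/- Let f : ℝ → S¹ be a pre-periodic function and f̃ : ℝ → ℝ a lift of f. Let 0 < ε < 1/8 and let g : ℝ → S¹ be a pre-periodic function with sup_{x ∈ ℝ} |g(x) − f(x)| < ε. Then there exists a unique lift g̃ : ℝ → ℝ of g such that sup_{x ∈ ℝ} |g̃(x) − f̃(x)| < ε/4. -/

import Mathlib

open Filter

/-- A continuous function `f : ℝ → ℂ` taking values in the unit circle `S¹` is *pre-periodic*
if for every `ε > 0` there is a positive integer `N` such that
`|f (x + k * N) - f x| < ε` for all integers `k` and all real `x`. -/
def PrePeriodic (f : ℝ → ℂ) : Prop :=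
  Continuous f ∧ (∀ x : ℝ, ‖f x‖ = 1) ∧
    ∀ ε : ℝ, 0 < ε → ∃ N : ℕ, 0 < N ∧
      ∀ (k : ℤ) (x : ℝ), ‖f (x + (k : ℝ) * (N : ℝ)) - f x‖ < ε

/-- `F : ℝ → ℝ` is a lift of `f : ℝ → S¹ ⊆ ℂ` if `F` is continuous and
`f x = e^{2 π i F x}` for all `x`. -/
def IsLift (f : ℝ → ℂ) (F : ℝ → ℝ) : Prop :=
  Continuous F ∧ ∀ x : ℝ, f x = Complex.exp (2 * Real.pi * Complex.I * (F x : ℂ))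

/-!
Since `‖g - f‖ < 1/8` and both take values on the unit circle, `g / f` never equals `-1`, so its
principal argument is continuous and `G = F + arg (g / f) / (2π)` lifts `g`. The chord–arc
inequality `|arg z| ≤ π/2 · ‖z - 1‖` on the unit circle gives `|G - F| ≤ ‖g - f‖ / 4`.
Any other lift differs from `G` by a continuous integer-valued, hence constant, function, and that
constant has absolute value `< ε/4 + ε/4 < 1` when both lifts stay within `ε/4` of `F`.
-/

open Complex
open scoped Real

theorem Complex.mem_slitPlane_of_norm_eq_one {z : ℂ} (hz : ‖z‖ = 1) (hz' : z ≠ -1) :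
    z ∈ slitPlane := by
  rw [mem_slitPlane_iff]
  by_contra! h
  have hz_re : z = z.re := Complex.ext rfl (by simp [h.2])
  rw [hz_re, norm_real, Real.norm_eq_abs, abs_of_nonpos h.1] at hz
  exact hz' (by rw [hz_re, show z.re = -1 by linarith]; push_cast; ring)

theorem Complex.abs_arg_le_pi_div_two_mul_norm_sub_one {z : ℂ} (hz : ‖z‖ = 1) :
    |arg z| ≤ π / 2 * ‖z - 1‖ := by
  have hz_exp : z = exp (I * arg z) := by
    simpa [hz, mul_comm] using (norm_mul_exp_arg_mul_I z).symm
  have h_half : |arg z / 2| ≤ π / 2 := by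
    rw [abs_div, abs_two]; linarith [abs_arg_le_pi z]
  have h_chord : ‖z - 1‖ = 2 * Real.sin |arg z / 2| := by
    conv_lhs => rw [hz_exp]
    rw [norm_exp_I_mul_ofReal_sub_one, norm_mul, Real.norm_eq_abs, Real.norm_eq_abs, abs_two,
      Real.abs_sin_eq_sin_abs_of_abs_le_pi (by linarith [Real.pi_pos])]
  have h_jordan := Real.mul_le_sin (abs_nonneg _) h_half
  calc |arg z| = π * (2 / π * |arg z / 2|) := by
        rw [abs_div, abs_two]; field_simp
    _ ≤ π * Real.sin |arg z / 2| := by gcongr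
    _ = π / 2 * ‖z - 1‖ := by rw [h_chord]; ring

theorem Continuous.exists_forall_eq_intCast {X : Type*} [TopologicalSpace X]
    [PreconnectedSpace X] [Nonempty X] {φ : X → ℝ} (hφ : Continuous φ)
    (hφ_int : ∀ x, φ x ∈ Set.range ((↑) : ℤ → ℝ)) : ∃ n : ℤ, ∀ x, φ x = n := by
  obtain ⟨x₀⟩ := ‹Nonempty X›
  obtain ⟨n, hn⟩ := hφ_int x₀
  exact ⟨n, fun x => hn ▸ isPreconnected_univ.constant_of_mapsTo
    Int.isClosedEmbedding_coe_real.isInducing.isDiscrete_range hφ.continuousOn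
    (fun x _ => hφ_int x) trivial trivial⟩

namespace IsLift

variable {f g : ℝ → ℂ} {F G G' : ℝ → ℝ}

theorem continuous (hF : IsLift f F) : Continuous f := by
  rw [funext hF.2]
  have := hF.1
  fun_prop

theorem norm_eq_one (hF : IsLift f F) (x : ℝ) : ‖f x‖ = 1 := by
  rw [hF.2 x, norm_exp]
  simp

theorem mul_of_mem_slitPlane {h : ℝ → ℂ} (hF : IsLift f F) (hh : Continuous h)
    (h_norm : ∀ x, ‖h x‖ = 1) (h_slit : ∀ x, h x ∈ slitPlane) :
    IsLift (fun x => f x * h x) (fun x => F x + arg (h x) / (2 * π)) := by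
  refine ⟨hF.1.add ((continuousOn_arg.comp_continuous hh h_slit).div_const _), fun x => ?_⟩
  have h_polar : exp (arg (h x) * I) = h x := by
    simpa [h_norm] using norm_mul_exp_arg_mul_I (h x)
  show f x * h x = _
  conv_lhs => rw [hF.2 x, ← h_polar, ← exp_add]
  congr 1
  push_cast
  field_simp

theorem exists_lift_abs_sub_le (hF : IsLift f F) (hg : Continuous g) (hg_norm : ∀ x, ‖g x‖ = 1)
    (hfg : ∀ x, g x ≠ -f x) : ∃ G, IsLift g G ∧ ∀ x, |G x - F x| ≤ ‖g x - f x‖ / 4 := by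
  have hf0 (x : ℝ) : f x ≠ 0 := norm_ne_zero_iff.1 (by simp [hF.norm_eq_one x])
  set h := fun x => g x / f x
  have h_norm (x : ℝ) : ‖h x‖ = 1 := by simp [h, hg_norm, hF.norm_eq_one]
  have h_sub (x : ℝ) : ‖h x - 1‖ = ‖g x - f x‖ := by
    rw [div_sub_one (hf0 x), norm_div, hF.norm_eq_one, div_one]
  have h_slit (x : ℝ) : h x ∈ slitPlane := by
    refine mem_slitPlane_of_norm_eq_one (h_norm x) fun hx => hfg x ?_
    rwa [div_eq_iff (hf0 x), neg_one_mul] at hx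
  have hh : Continuous h := hg.div hF.continuous hf0
  refine ⟨fun x => F x + arg (h x) / (2 * π), ?_, fun x => ?_⟩
  · simpa only [h, mul_div_cancel₀ _ (hf0 _)] using
      hF.mul_of_mem_slitPlane hh h_norm h_slit
  · rw [add_sub_cancel_left, abs_div, abs_of_pos Real.two_pi_pos, div_le_iff₀ Real.two_pi_pos,
      ← h_sub]
    linarith [abs_arg_le_pi_div_two_mul_norm_sub_one (h_norm x)]

theorem exists_sub_eq_intCast (hG : IsLift g G) (hG' : IsLift g G') :
    ∃ n : ℤ, ∀ x, G' x - G x = n := by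
  refine (hG'.1.sub hG.1).exists_forall_eq_intCast fun x => ?_
  obtain ⟨n, hn⟩ := exp_eq_exp_iff_exists_int.1 ((hG'.2 x).symm.trans (hG.2 x))
  have h_mul : (2 * π * I) * ((G' x - G x : ℝ) : ℂ) = (2 * π * I) * n := by
    push_cast
    linear_combination hn
  exact ⟨n, by exact_mod_cast (mul_left_cancel₀ (by simp [Real.pi_ne_zero]) h_mul).symm⟩

theorem bddAbove_abs_sub (hG : IsLift g G) (hG' : IsLift g G')
    (hGF : BddAbove (Set.range fun x => |G x - F x|)) :
    BddAbove (Set.range fun x => |G' x - F x|) := by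
  obtain ⟨n, hn⟩ := hG.exists_sub_eq_intCast hG'
  obtain ⟨c, hc⟩ := hGF
  refine ⟨|(n : ℝ)| + c, ?_⟩
  rintro _ ⟨x, rfl⟩
  calc |G' x - F x| ≤ |G' x - G x| + |G x - F x| := abs_sub_le _ _ _
    _ ≤ |(n : ℝ)| + c := by rw [hn x]; gcongr; exact hc ⟨x, rfl⟩

theorem eq_of_abs_sub_lt_one (hG : IsLift g G) (hG' : IsLift g G') (x₀ : ℝ)
    (h : |G' x₀ - G x₀| < 1) : G' = G := by
  obtain ⟨n, hn⟩ := hG.exists_sub_eq_intCast hG'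
  have hn0 : n = 0 := by
    rw [← Int.abs_lt_one_iff, ← Int.cast_lt (R := ℝ)]
    simpa [← hn x₀] using h
  funext x
  simpa [hn0, sub_eq_zero] using hn x

end IsLift

theorem preperiodic_close_lift (f g : ℝ → ℂ) (F : ℝ → ℝ) (ε : ℝ)
    (hF : IsLift f F) (hε : ε < 1 / 8)
    (hg : PrePeriodic g) (hfg : (⨆ x : ℝ, ‖g x - f x‖) < ε) :
    ∃! G : ℝ → ℝ, IsLift g G ∧ (⨆ x : ℝ, |G x - F x|) < ε / 4 := by
  obtain ⟨hg_cont, hg_norm, -⟩ := hg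
  have hfg_bdd : BddAbove (Set.range fun x => ‖g x - f x‖) := by
    refine ⟨2, ?_⟩
    rintro _ ⟨x, rfl⟩
    linarith [norm_sub_le (g x) (f x), hg_norm x, hF.norm_eq_one x]
  have hfg_lt (x : ℝ) : ‖g x - f x‖ < ε := (le_ciSup hfg_bdd x).trans_lt hfg
  have hfg_ne (x : ℝ) : g x ≠ -f x := by
    intro hx
    have := hfg_lt x
    rw [hx, ← neg_add', norm_neg, ← two_mul, norm_mul, hF.norm_eq_one] at this
    norm_num at this
    linarith
  obtain ⟨G, hG, hGF⟩ := hF.exists_lift_abs_sub_le hg_cont hg_norm hfg_ne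
  have hGF_sup : (⨆ x, |G x - F x|) ≤ (⨆ x, ‖g x - f x‖) / 4 :=
    ciSup_le fun x => (hGF x).trans (by gcongr; exact le_ciSup hfg_bdd x)
  have hGF_bdd : BddAbove (Set.range fun x => |G x - F x|) :=
    ⟨ε / 4, by rintro _ ⟨x, rfl⟩; linarith [hGF x, hfg_lt x]⟩
  refine ⟨G, ⟨hG, by linarith⟩, fun G' ⟨hG', hG'F⟩ => hG.eq_of_abs_sub_lt_one hG' 0 ?_⟩
  calc |G' 0 - G 0| ≤ |G' 0 - F 0| + |F 0 - G 0| := abs_sub_le _ _ _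
    _ < ε / 4 + ε / 4 := by
        -- `⨆` is junk (`0`) on unbounded ranges, hence `bddAbove_abs_sub`
        rw [abs_sub_comm (F 0)]
        exact add_lt_add ((le_ciSup (hG.bddAbove_abs_sub hG' hGF_bdd) 0).trans_lt hG'F)
          ((le_ciSup hGF_bdd 0).trans_lt (by linarith))
    _ < 1 := by linarith
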